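/- Let $\Theta = \frac{1}{4\zeta(5)}$, where $\zeta$ is the Riemann zeta function, and define $\delta : \mathbb{R} \to \mathbb{R}$ by $\delta(x) = \left(\frac{256}{527} e^{-8x} + \frac{270}{527} + \frac{1}{527} e^{8x}\right)\Theta$. Then $\delta(0) = \Theta$, $\delta\!\left(\operatorname{artanh}\tfrac{3}{5}\right) = \Theta$, and $\delta(x) < \Theta$ for all $x$ with $0 < x < \operatorname{artanh}\tfrac{3}{5}$. Consequently the maximum of $\delta$ on the interval $[0, \operatorname{artanh}\tfrac{3}{5}]$ equals $\Theta$ and is attained exactly at the two endpoints. -/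

import Mathlib

/-- The inverse hyperbolic tangent, `artanh s = (1/2) log ((1+s)/(1-s))` for `-1 < s < 1`. -/
noncomputable def arctanh (s : ℝ) : ℝ := (1 / 2) * Real.log ((1 + s) / (1 - s))

lemma arctanh_35 : arctanh (3 / 5) = Real.log 2 := by
  unfold arctanh
  have h4 : (1 + (3:ℝ)/5) / (1 - 3/5) = 2 ^ 2 := by norm_num
  rw [h4, Real.log_pow]
  push_cast; ring

lemma theta_pos (Θ : ℝ)
    (hΘ : Θ = 1 / (4 * ∑' n : ℕ, (1 : ℝ) / ((n : ℝ) + 1) ^ 5)) : 0 < Θ := by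
  have hs : Summable (fun n : ℕ => (1 : ℝ) / ((n : ℝ) + 1) ^ 5) := by
    have h := (Real.summable_one_div_nat_pow (p := 5)).mpr (by norm_num)
    have h2 := (summable_nat_add_iff (f := fun n : ℕ => (1 : ℝ) / (n : ℝ) ^ 5) 1).mpr h
    convert h2 using 2 with n
    · rfl
    push_cast; ring_nf
  have hpos : 0 < ∑' n : ℕ, (1 : ℝ) / ((n : ℝ) + 1) ^ 5 :=
    Summable.tsum_pos hs (fun n => by positivity) 0 (by norm_num)
  rw [hΘ]; positivity

lemma coeff_lt_one {x : ℝ} (hx0 : 0 < x) (hx1 : x < Real.log 2) :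
    256 / 527 * Real.exp (-(8 * x)) + 270 / 527 + 1 / 527 * Real.exp (8 * x) < 1 := by
  set t := Real.exp (8 * x) with ht
  have ht1 : 1 < t := by
    rw [ht, show (1:ℝ) = Real.exp 0 by simp]
    exact Real.exp_lt_exp.mpr (by linarith)
  have ht256 : t < 256 := by
    have : (256 : ℝ) = Real.exp (Real.log 256) := (Real.exp_log (by norm_num)).symm
    rw [this, ht]
    apply Real.exp_lt_exp.mpr
    have : Real.log 256 = 8 * Real.log 2 := by
      rw [show (256:ℝ) = 2 ^ 8 by norm_num, Real.log_pow]; push_cast; ring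
    rw [this]; linarith
  have hneg : Real.exp (-(8 * x)) = t⁻¹ := by rw [Real.exp_neg]
  rw [hneg]
  have htpos : 0 < t := by linarith
  have hkey : (t - 1) * (t - 256) < 0 :=
    mul_neg_of_pos_of_neg (by linarith) (by linarith)
  have hinv : t * t⁻¹ = 1 := mul_inv_cancel₀ (ne_of_gt htpos)
  have h2 : 256 / t + t < 257 := by
    rw [div_add' _ _ _ (ne_of_gt htpos), div_lt_iff₀ htpos]
    nlinarith [hkey]
  have h3 : (256 : ℝ) * t⁻¹ = 256 / t := by rw [div_eq_mul_inv]
  linarith [h2, h3]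

/-- The key analytic step of Theorem 5 (the tiling `Q₉` in hyperbolic
9-space): with `Θ = 1/(4ζ(5))` and
`δ x = (256/527 e^(-8x) + 270/527 + 1/527 e^(8x)) Θ`, one has `δ 0 = Θ`,
`δ (artanh (3/5)) = Θ`, `δ x < Θ` on the open interval, so the maximum of `δ` on
`[0, artanh (3/5)]` is `Θ` and it is attained exactly at the two endpoints. -/
theorem density_Q9_max_at_endpoints
    (Θ : ℝ) (hΘ : Θ = 1 / (4 * ∑' n : ℕ, (1 : ℝ) / ((n : ℝ) + 1) ^ 5))
    (δ : ℝ → ℝ)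
    (hδ : ∀ x : ℝ, δ x =
      (256 / 527 * Real.exp (-(8 * x)) + 270 / 527 + 1 / 527 * Real.exp (8 * x)) * Θ) :
    δ 0 = Θ ∧
    δ (arctanh (3 / 5)) = Θ ∧
    (∀ x : ℝ, 0 < x → x < arctanh (3 / 5) → δ x < Θ) ∧
    IsMaxOn δ (Set.Icc 0 (arctanh (3 / 5))) 0 ∧
    IsMaxOn δ (Set.Icc 0 (arctanh (3 / 5))) (arctanh (3 / 5)) ∧
    (∀ x ∈ Set.Icc 0 (arctanh (3 / 5)), δ x = Θ → x = 0 ∨ x = arctanh (3 / 5)) := by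
  have hT := theta_pos Θ hΘ
  have h0 : δ 0 = Θ := by rw [hδ]; norm_num
  have hend : δ (arctanh (3 / 5)) = Θ := by
    rw [hδ, arctanh_35]
    have hlog : 8 * Real.log 2 = Real.log 256 := by
      rw [show (256:ℝ) = 2 ^ 8 by norm_num, Real.log_pow]; push_cast; ring
    rw [hlog, Real.exp_log (by norm_num : (0:ℝ) < 256), Real.exp_neg,
      Real.exp_log (by norm_num : (0:ℝ) < 256)]
    norm_num
  have hstrict : ∀ x : ℝ, 0 < x → x < arctanh (3 / 5) → δ x < Θ := by
    intro x hx0 hx1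
    rw [arctanh_35] at hx1
    rw [hδ]
    calc (256 / 527 * Real.exp (-(8 * x)) + 270 / 527 + 1 / 527 * Real.exp (8 * x)) * Θ
        < 1 * Θ := by
          exact mul_lt_mul_of_pos_right (coeff_lt_one hx0 hx1) hT
      _ = Θ := one_mul Θ
  have hle : ∀ y ∈ Set.Icc 0 (arctanh (3 / 5)), δ y ≤ Θ := by
    rintro y ⟨hy0, hy1⟩
    rcases eq_or_lt_of_le hy0 with rfl | hy0'
    · exact h0.le
    rcases eq_or_lt_of_le hy1 with rfl | hy1'
    · exact hend.le
    · exact (hstrict y hy0' hy1').le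
  refine ⟨h0, hend, hstrict, ?_, ?_, ?_⟩
  · intro y hy; simpa [h0] using hle y hy
  · intro y hy; simpa [hend] using hle y hy
  · rintro x ⟨hx0, hx1⟩ hx
    rcases eq_or_lt_of_le hx0 with rfl | hx0'
    · exact Or.inl rfl
    rcases eq_or_lt_of_le hx1 with rfl | hx1'
    · exact Or.inr rfl
    · exact absurd hx (ne_of_lt (hstrict x hx0' hx1'))
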